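/- Let ℓ_1, ..., ℓ_n : ℝ^k → ℝ each be convex, differentiable, and λ-smooth, let L(θ) = (1/n) Σᵢ ℓᵢ(θ), and suppose ∇L(θ⋆) = 0. Then (1/n) Σᵢ ‖∇ℓᵢ(θ) − ∇ℓᵢ(θ⋆)‖² ≤ 2λ (L(θ) − L(θ⋆)) for every θ. -/

import Mathlib

/-!
For a convex `f` with `λ`-Lipschitz gradient, evaluate the first-order convexity inequality at `y`
and the quadratic upper bound (descent lemma) at `x`, both at the gradient step
`z = x - λ⁻¹ (∇f x - ∇f y)`: together they give the co-coercivity bound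
`‖∇f x - ∇f y‖² ≤ 2λ (f x - f y - ⟪∇f y, x - y⟫)`. Averaging it over the components at `y = θ⋆`
kills the linear term, because the average gradient vanishes at `θ⋆`.
-/

open RealInnerProductSpace Set

variable {E : Type*} [NormedAddCommGroup E] [InnerProductSpace ℝ E] [CompleteSpace E]
  {f : E → ℝ} {g : E → E} {g' : E}

lemma HasGradientAt.hasDerivAt_comp_add_smul {x v : E} {t : ℝ}
    (h : HasGradientAt f g' (x + t • v)) :
    HasDerivAt (fun s : ℝ => f (x + s • v)) ⟪g', v⟫ t := by
  have hline : HasDerivAt (fun s : ℝ => x + s • v) v t := by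
    simpa using ((hasDerivAt_id t).smul_const v).const_add x
  have hcomp := h.hasFDerivAt.comp_hasDerivAt t hline
  simp only [InnerProductSpace.toDual_apply_apply] at hcomp
  exact hcomp

lemma ConvexOn.add_inner_le_of_hasGradientAt {s : Set E} {x y : E} (hf : ConvexOn ℝ s f)
    (hx : x ∈ s) (hy : y ∈ s) (h : HasGradientAt f g' y) :
    f y + ⟪g', x - y⟫ ≤ f x := by
  have hline : ConvexOn ℝ (AffineMap.lineMap y x ⁻¹' s) (f ∘ AffineMap.lineMap y x) :=
    hf.comp_affineMap _
  have hderiv : HasDerivAt (fun t : ℝ => f (y + t • (x - y))) ⟪g', x - y⟫ 0 :=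
    HasGradientAt.hasDerivAt_comp_add_smul (by simpa using h)
  have hcomp : (fun t : ℝ => f (y + t • (x - y))) = f ∘ AffineMap.lineMap y x := by
    ext t
    simp [AffineMap.lineMap_apply_module', add_comm]
  rw [hcomp] at hderiv
  have hslope := hline.le_slope_of_hasDerivWithinAt_Ioi (by simpa using hy) (by simpa using hx)
    one_pos hderiv.hasDerivWithinAt
  simp [slope_def_field] at hslope
  linarith

lemma le_add_inner_add_sq_of_lipschitz_gradient {lam : ℝ} (hg : ∀ x, HasGradientAt f (g x) x)
    (hlip : ∀ x y, ‖g x - g y‖ ≤ lam * ‖x - y‖) (x y : E) :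
    f y ≤ f x + ⟪g x, y - x⟫ + lam / 2 * ‖y - x‖ ^ 2 := by
  set v := y - x
  let φ : ℝ → ℝ := fun t => t * ⟪g x, v⟫ + lam / 2 * t ^ 2 * ‖v‖ ^ 2 - f (x + t • v)
  have hφ : ∀ t, HasDerivAt φ (⟪g x, v⟫ + lam * t * ‖v‖ ^ 2 - ⟪g (x + t • v), v⟫) t := by
    intro t
    have hpoly : HasDerivAt (fun t : ℝ => t * ⟪g x, v⟫ + lam / 2 * t ^ 2 * ‖v‖ ^ 2)
        (⟪g x, v⟫ + lam * t * ‖v‖ ^ 2) t := by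
      refine (((hasDerivAt_id t).mul_const ⟪g x, v⟫).add
        (((hasDerivAt_pow 2 t).const_mul (lam / 2)).mul_const (‖v‖ ^ 2))).congr_deriv ?_
      ring
    exact hpoly.sub (hg _).hasDerivAt_comp_add_smul
  have hinner : ∀ t ∈ Icc (0 : ℝ) 1, ⟪g (x + t • v) - g x, v⟫ ≤ lam * t * ‖v‖ ^ 2 := by
    intro t ht
    calc ⟪g (x + t • v) - g x, v⟫ ≤ ‖g (x + t • v) - g x‖ * ‖v‖ := real_inner_le_norm _ _
      _ ≤ lam * ‖t • v‖ * ‖v‖ := by gcongr; simpa using hlip (x + t • v) x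
      _ = lam * t * ‖v‖ ^ 2 := by rw [norm_smul, Real.norm_of_nonneg ht.1]; ring
  have hmono : MonotoneOn φ (Icc 0 1) := by
    refine monotoneOn_of_hasDerivWithinAt_nonneg (convex_Icc 0 1)
      (fun t _ => (hφ t).continuousAt.continuousWithinAt) (fun t _ => (hφ t).hasDerivWithinAt)
      fun t ht => ?_
    have ht' := hinner t (interior_subset ht)
    rw [inner_sub_left] at ht'
    linarith
  have hends := hmono (left_mem_Icc.2 zero_le_one) (right_mem_Icc.2 zero_le_one) zero_le_one
  simp [φ, v] at hends
  linarith

lemma norm_sub_sq_le_of_convexOn_of_lipschitz_gradient {lam : ℝ} (hf : ConvexOn ℝ univ f)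
    (hg : ∀ x, HasGradientAt f (g x) x) (hlip : ∀ x y, ‖g x - g y‖ ≤ lam * ‖x - y‖) (x y : E) :
    ‖g x - g y‖ ^ 2 ≤ 2 * lam * (f x - f y - ⟪g y, x - y⟫) := by
  rcases le_or_gt lam 0 with hlam | hlam
  · have hxy := hlip x y
    rcases hlam.eq_or_lt with rfl | hneg
    · have hgxy : g x = g y := by simpa [sub_eq_zero] using hxy
      simp [hgxy]
    · obtain rfl : x = y := by
        by_contra hne
        nlinarith [norm_nonneg (g x - g y), norm_pos_iff.2 (sub_ne_zero.2 hne)]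
      simp
  set d := g x - g y
  set z := x - lam⁻¹ • d
  have hupper := le_add_inner_add_sq_of_lipschitz_gradient hg hlip x z
  have hlower := hf.add_inner_le_of_hasGradientAt (mem_univ z) (mem_univ y) (hg y)
  have hzx : z - x = -(lam⁻¹ • d) := by simp [z]
  have hzy : z - y = (x - y) - lam⁻¹ • d := by simp only [z]; abel
  rw [hzx, inner_neg_right, real_inner_smul_right, norm_neg, norm_smul, Real.norm_of_nonneg
    (inv_nonneg.2 hlam.le)] at hupper
  rw [hzy, inner_sub_right, real_inner_smul_right] at hlower
  have hd : lam⁻¹ * ⟪g x, d⟫ - lam⁻¹ * ⟪g y, d⟫ = lam⁻¹ * ‖d‖ ^ 2 := by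
    rw [← mul_sub, ← inner_sub_left, real_inner_self_eq_norm_sq]
  have hquad : lam / 2 * (lam⁻¹ * ‖d‖) ^ 2 = lam⁻¹ / 2 * ‖d‖ ^ 2 := by field_simp
  have key : lam⁻¹ / 2 * ‖d‖ ^ 2 ≤ f x - f y - ⟪g y, x - y⟫ := by linarith
  calc ‖d‖ ^ 2 = 2 * lam * (lam⁻¹ / 2 * ‖d‖ ^ 2) := by field_simp
    _ ≤ 2 * lam * (f x - f y - ⟪g y, x - y⟫) := by gcongr

theorem stmt_2_general {k n : ℕ}
    (ℓ : Fin n → EuclideanSpace ℝ (Fin k) → ℝ)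
    (g : Fin n → EuclideanSpace ℝ (Fin k) → EuclideanSpace ℝ (Fin k)) (lam : ℝ)
    (hconv : ∀ i, ConvexOn ℝ Set.univ (ℓ i))
    (hgrad : ∀ i x, HasGradientAt (ℓ i) (g i x) x)
    (hlip : ∀ i x y, ‖g i x - g i y‖ ≤ lam * ‖x - y‖)
    (L : EuclideanSpace ℝ (Fin k) → ℝ)
    (hL : ∀ θ, L θ = (1 / (n : ℝ)) * ∑ i, ℓ i θ)
    (θs : EuclideanSpace ℝ (Fin k))
    (hstat : (1 / (n : ℝ)) • ∑ i, g i θs = 0) :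
    ∀ θ, (1 / (n : ℝ)) * ∑ i, ‖g i θ - g i θs‖ ^ 2 ≤ 2 * lam * (L θ - L θs) := by
  intro θ
  calc (1 / (n : ℝ)) * ∑ i, ‖g i θ - g i θs‖ ^ 2
      ≤ (1 / (n : ℝ)) * ∑ i, 2 * lam * (ℓ i θ - ℓ i θs - ⟪g i θs, θ - θs⟫) := by
        gcongr with i
        exact norm_sub_sq_le_of_convexOn_of_lipschitz_gradient (hconv i) (hgrad i) (hlip i) θ θs
    _ = 2 * lam * (L θ - L θs - ⟪(1 / (n : ℝ)) • ∑ i, g i θs, θ - θs⟫) := by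
        rw [real_inner_smul_left, sum_inner, ← Finset.mul_sum, Finset.sum_sub_distrib,
          Finset.sum_sub_distrib, hL, hL]
        ring
    _ = 2 * lam * (L θ - L θs) := by rw [hstat, inner_zero_left, sub_zero]

theorem stmt_2 {k n : ℕ} (hn : 0 < n)
    (ℓ : Fin n → EuclideanSpace ℝ (Fin k) → ℝ)
    (g : Fin n → EuclideanSpace ℝ (Fin k) → EuclideanSpace ℝ (Fin k)) (lam : ℝ)
    (hconv : ∀ i, ConvexOn ℝ Set.univ (ℓ i))
    (hgrad : ∀ i x, HasGradientAt (ℓ i) (g i x) x)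
    (hlip : ∀ i x y, ‖g i x - g i y‖ ≤ lam * ‖x - y‖)
    (L : EuclideanSpace ℝ (Fin k) → ℝ)
    (hL : ∀ θ, L θ = (1 / (n : ℝ)) * ∑ i, ℓ i θ)
    (θs : EuclideanSpace ℝ (Fin k))
    (hstat : (1 / (n : ℝ)) • ∑ i, g i θs = 0) :
    ∀ θ, (1 / (n : ℝ)) * ∑ i, ‖g i θ - g i θs‖ ^ 2 ≤ 2 * lam * (L θ - L θs) :=
  stmt_2_general ℓ g lam hconv hgrad hlip L hL θs hstat
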